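/- The two descriptions of the Connes–Kreimer coproduct agree: for every rooted tree t, the admissible-cut coproduct satisfies Δ(t) = t⊗1 + (id⊗B_+)(Δ(B_−(t))), where B_− is the inverse of B_+ (so B_−(t) is the forest of branches of the root of t) and Δ acts multiplicatively on forests. -/

import Mathlib

/-! ### Planar rooted trees -/

/-- A planar rooted tree: a root with an ordered list of branches.
`PTree.node [T₁,…,T_k]` is `B₊(T₁⋯T_k)`; `PTree.node []` is the one-vertex tree `•`. -/
inductive PTree : Type where
  | node : List PTree → PTree

instance : Inhabited PTree := ⟨.node []⟩

noncomputable instance : DecidableEq PTree := Classical.decEq _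

/-- Number of vertices of a planar rooted tree. -/
def PTree.size : PTree → ℕ
  | .node l => 1 + (l.attach.map (fun x => PTree.size x.1)).sum
decreasing_by
  have h := List.sizeOf_lt_of_mem x.2
  simp only [PTree.node.sizeOf_spec]
  omega

/-! ### Rooted trees -/

/-- Isomorphism of the underlying rooted trees: the lists of branches agree
up to permutation and recursive isomorphism. -/
inductive PTree.Equiv : PTree → PTree → Prop where
  | node {l m m' : List PTree} :
      List.Forall₂ PTree.Equiv l m' → List.Perm m' m → PTree.Equiv (.node l) (.node m)

/-- Rooted trees: planar rooted trees modulo isomorphism. -/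
def RTree : Type := Quot PTree.Equiv

/-- The underlying rooted tree of a planar rooted tree. -/
def toR : PTree → RTree := Quot.mk _

/-- A choice of planar representative of a rooted tree. -/
noncomputable def RTree.out : RTree → PTree := Quot.out

noncomputable instance : DecidableEq RTree := Classical.decEq _

/-- The order of the symmetry group of (the underlying rooted tree of) a planar
rooted tree: `|Sym(B₊(t₁⋯t_k))| = (∏_s m_s!)·∏ᵢ |Sym(tᵢ)|`, where `m_s` is the
multiplicity of the isomorphism type `s` among the branches `t₁,…,t_k`. -/
noncomputable def PTree.symOrder : PTree → ℕ
  | .node l =>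
      (l.attach.map (fun x => PTree.symOrder x.1)).prod *
      (((l.map toR : List RTree) : Multiset RTree).toFinset.prod
        (fun s => (Multiset.count s (l.map toR : Multiset RTree)).factorial))
decreasing_by
  have h := List.sizeOf_lt_of_mem x.2
  simp only [PTree.node.sizeOf_spec]
  omega

/-- The order of the symmetry group of a rooted tree. -/
noncomputable def RTree.sym (t : RTree) : ℕ := t.out.symOrder

/-- Number of vertices of a rooted tree. -/
noncomputable def RTree.size (t : RTree) : ℕ := t.out.size

/-- `B₊` for rooted trees: attach a new root to a multiset forest. -/
noncomputable def RTree.node (m : Multiset RTree) : RTree :=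
  toR (PTree.node (m.toList.map RTree.out))

/-- The one-vertex rooted tree `•`. -/
noncomputable def RTree.bullet : RTree := toR (.node [])

/-! ### Cuts -/

/-- A decoration of (the edges of) a tree by Booleans: `true` means the edge
belongs to the cut. `Cut.node [(b₁,c₁),…,(b_k,c_k)]` matches a tree
`PTree.node [t₁,…,t_k]`, with `bᵢ` decorating the edge from the root to `tᵢ`
and `cᵢ` a cut of `tᵢ`. -/
inductive Cut : Type where
  | node : List (Bool × Cut) → Cut

namespace Cut

mutual
/-- The number of edges in a cut. -/
def size : Cut → ℕ
  | .node l => sizeList l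
/-- The number of edges in a list of decorated edges. -/
def sizeList : List (Bool × Cut) → ℕ
  | [] => 0
  | (b, c) :: cs => (if b then 1 else 0) + size c + sizeList cs
end

mutual
/-- The cut containing no edges. -/
def isEmpty : Cut → Bool
  | .node l => isEmptyList l
/-- Whether a list of decorated edges contains no cut edge. -/
def isEmptyList : List (Bool × Cut) → Bool
  | [] => true
  | (b, c) :: cs => !b && isEmpty c && isEmptyList cs
end

mutual
/-- A cut is admissible if every path from the root to a leaf meets it at most
once, i.e. below a cut edge there is no further cut edge. -/
def admissible : Cut → Bool
  | .node l => admissibleList l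
/-- Admissibility for a list of decorated edges. -/
def admissibleList : List (Bool × Cut) → Bool
  | [] => true
  | (b, c) :: cs => (if b then isEmpty c else admissible c) && admissibleList cs
end

end Cut

namespace PTree

mutual
/-- All cuts (edge subsets) of a planar rooted tree. -/
def cutsOf : PTree → List Cut
  | .node l => (cutsOfList l).map Cut.node
/-- All decorations of a forest. -/
def cutsOfList : List PTree → List (List (Bool × Cut))
  | [] => [[]]
  | t :: ts =>
      (cutsOf t).flatMap (fun c =>
        (cutsOfList ts).flatMap (fun cs => [(true, c) :: cs, (false, c) :: cs]))
end

mutual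
/-- `cutPieces t c = (R^c(t), P^c(t))`: the root component of `t` after removing
the edges of `c`, together with the ordered forest of the remaining components
(in planar depth-first order). -/
def cutPieces : PTree → Cut → PTree × List PTree
  | .node l, .node cs =>
      ((PTree.node (cutPiecesList l cs).1 : PTree), (cutPiecesList l cs).2)
/-- `cutPieces` for forests. -/
def cutPiecesList : List PTree → List (Bool × Cut) → List PTree × List PTree
  | [], _ => ([], [])
  | _ :: _, [] => ([], [])
  | t :: ts, (b, c) :: cs =>
      let p := cutPieces t c
      let q := cutPiecesList ts cs
      if b then (q.1, (p.1 :: p.2) ++ q.2) else (p.1 :: q.1, p.2 ++ q.2)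
end

/-- `R^c(T)`, the component containing the root. -/
def Rcut (t : PTree) (c : Cut) : PTree := (cutPieces t c).1

/-- `P^c(T)`, the ordered forest of components not containing the root. -/
def Pcut (t : PTree) (c : Cut) : List PTree := (cutPieces t c).2

end PTree

/-- `R^c` for rooted trees. -/
noncomputable def RcutR (t : RTree) (c : Cut) : RTree := toR (t.out.Rcut c)

/-- `P^c` for rooted trees: a multiset forest. -/
noncomputable def PcutR (t : RTree) (c : Cut) : Multiset RTree :=
  ((t.out.Pcut c).map toR : List RTree)

/-! ### The Connes–Kreimer Hopf algebra -/

/-- The Connes–Kreimer Hopf algebra over `k`: the free commutative algebra on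
rooted trees, with monomial basis the forests (multisets) of rooted trees. -/
abbrev HK (k : Type*) [CommSemiring k] := AddMonoidAlgebra k (Multiset RTree)

/-- The model for `H_K ⊗ H_K`: monomial basis consists of pairs of forests. -/
abbrev HK2 (k : Type*) [CommSemiring k] :=
  AddMonoidAlgebra k (Multiset RTree × Multiset RTree)

/-- The Connes–Kreimer coproduct of a rooted tree:
`Δ(t) = t ⊗ 1 + Σ_{admissible cuts c of t} P^c(t) ⊗ R^c(t)`
(the empty cut contributing `1 ⊗ t`). -/
noncomputable def ckComulTree (k : Type*) [CommSemiring k] (t : RTree) : HK2 k :=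
  AddMonoidAlgebra.single (({t} : Multiset RTree), (0 : Multiset RTree)) (1 : k) +
  (((PTree.cutsOf t.out).filter (fun c => Cut.admissible c)).map (fun c =>
    AddMonoidAlgebra.single
      (PcutR t c, ({RcutR t c} : Multiset RTree)) (1 : k))).sum

/-- The Connes–Kreimer coproduct of a forest (multiplicative extension). -/
noncomputable def ckComulForest (k : Type*) [CommSemiring k] (w : Multiset RTree) : HK2 k :=
  (w.map (ckComulTree k)).prod

/-- The Connes–Kreimer coproduct on `H_K` (linear extension). -/
noncomputable def ckComul (k : Type*) [CommSemiring k] (f : HK k) : HK2 k :=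
  f.coeff.sum (fun w a => a • ckComulForest k w)

/-- `B₋(t)`: the forest of branches of the root of `t`. -/
noncomputable def branches (t : RTree) : Multiset RTree :=
  match t.out with
  | .node l => ((l.map toR : List RTree) : Multiset RTree)

/-- `id ⊗ B₊` on `H_K ⊗ H_K`. -/
noncomputable def idTensorBplus (k : Type*) [CommSemiring k] (f : HK2 k) : HK2 k :=
  AddMonoidAlgebra.ofCoeff
    (Finsupp.mapDomain (fun p => (p.1, ({RTree.node p.2} : Multiset RTree))) f.coeff)

/-! Work with planar representatives. A cut of `B₊(t₁⋯t_k)` chooses, independently for each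
branch `tᵢ`, either to cut the edge to `tᵢ` (admissible only if nothing below it is cut, and then
`tᵢ` becomes a piece of `P`) or an admissible cut of `tᵢ` (whose pieces join `P` and whose root
component is grafted on the new root). So the sum over admissible cuts of the forest `t₁⋯t_k`
factors as `∏ᵢ Δ(tᵢ)`, and regrafting the root components is `id ⊗ B₊`. The planar coproduct is
invariant under isomorphism of trees, hence computes `Δ` on rooted trees. -/

theorem List.sum_map_filter {α M : Type*} [AddCommMonoid M] (p : α → Bool) (f : α → M)
    (l : List α) : ((l.filter p).map f).sum = (l.map fun a => if p a then f a else 0).sum := by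
  simp [List.sum_map_ite]

namespace PTree

mutual
theorem equiv_refl : ∀ t : PTree, t.Equiv t
  | .node l => .node (forall₂_equiv_refl l) (List.Perm.refl l)

theorem forall₂_equiv_refl : ∀ l : List PTree, List.Forall₂ PTree.Equiv l l
  | [] => .nil
  | t :: l => .cons (equiv_refl t) (forall₂_equiv_refl l)
end

mutual
theorem Equiv.symm : ∀ {t u : PTree}, t.Equiv u → u.Equiv t
  | .node _, .node _, .node hf hp => by
    obtain ⟨q, hq, hql⟩ := List.perm_comp_forall₂ hp.symm (forall₂_equiv_symm hf)
    exact .node hq hql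

theorem forall₂_equiv_symm :
    ∀ {l m : List PTree}, List.Forall₂ Equiv l m → List.Forall₂ Equiv m l
  | [], [], .nil => .nil
  | _ :: _, _ :: _, .cons h hs => .cons h.symm (forall₂_equiv_symm hs)
end

mutual
theorem Equiv.trans : ∀ {t u v : PTree}, t.Equiv u → u.Equiv v → t.Equiv v
  | .node _, .node _, .node _, .node hf₁ hp₁, .node hf₂ hp₂ => by
    obtain ⟨q, hq, hqp⟩ := List.perm_comp_forall₂ hp₁ hf₂
    exact .node (forall₂_equiv_trans hf₁ hq) (hqp.trans hp₂)

theorem forall₂_equiv_trans : ∀ {l m n : List PTree},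
    List.Forall₂ Equiv l m → List.Forall₂ Equiv m n → List.Forall₂ Equiv l n
  | [], [], [], .nil, .nil => .nil
  | _ :: _, _ :: _, _ :: _, .cons h hs, .cons h' hs' =>
    .cons (h.trans h') (forall₂_equiv_trans hs hs')
end

theorem equivalence_equiv : Equivalence PTree.Equiv := ⟨equiv_refl, Equiv.symm, Equiv.trans⟩

end PTree

theorem toR_eq_toR_iff {t u : PTree} : toR t = toR u ↔ t.Equiv u :=
  ⟨fun h => PTree.equivalence_equiv.eqvGen_iff.mp (Quot.eqvGen_exact h), Quot.sound⟩

theorem RTree.toR_out (t : RTree) : toR t.out = t := Quot.out_eq t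

theorem PTree.equiv_out_toR (t : PTree) : (toR t).out.Equiv t :=
  toR_eq_toR_iff.mp (RTree.toR_out (toR t))

def toRForest (l : List PTree) : Multiset RTree := ↑(l.map toR)

theorem RTree.node_toRForest (l : List PTree) : RTree.node (toRForest l) = toR (.node l) := by
  refine (Quot.sound (PTree.Equiv.node (m' := l.map fun t => (toR t).out) ?_ ?_)).symm
  · exact List.forall₂_map_right_iff.mpr
      (List.forall₂_same.mpr fun t _ => (PTree.equiv_out_toR t).symm)
  · have h : (l.map toR).Perm (toRForest l).toList := by
      rw [← Multiset.coe_eq_coe, Multiset.coe_toList]; rfl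
    simpa [List.map_map, Function.comp_def] using h.map RTree.out

namespace PTree

mutual
theorem cutPieces_of_isEmpty : ∀ {t : PTree} {c : Cut}, c ∈ cutsOf t → c.isEmpty →
    cutPieces t c = (t, [])
  | .node l, _, hc, he => by
    obtain ⟨cs, hcs, rfl⟩ := List.mem_map.mp hc
    simp [cutPieces, cutPiecesList_of_isEmptyList hcs he]

theorem cutPiecesList_of_isEmptyList : ∀ {l : List PTree} {cs : List (Bool × Cut)},
    cs ∈ cutsOfList l → Cut.isEmptyList cs → cutPiecesList l cs = (l, [])
  | [], _, hcs, _ => by simp [cutPiecesList]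
  | t :: ts, _, hcs, he => by
    simp only [cutsOfList, List.mem_flatMap, List.mem_cons, List.not_mem_nil,
      or_false] at hcs
    obtain ⟨c, hc, cs, hcs, rfl | rfl⟩ := hcs
    · simp [Cut.isEmptyList] at he
    · simp only [Cut.isEmptyList, Bool.not_false, Bool.true_and, Bool.and_eq_true] at he
      simp [cutPiecesList, cutPieces_of_isEmpty hc he.1, cutPiecesList_of_isEmptyList hcs he.2]
end

theorem sum_map_cutsOfList_cons {M : Type*} [NonUnitalNonAssocSemiring M] {t : PTree}
    {ts : List PTree} (F : List (Bool × Cut) → M) (u₁ u₀ : Cut → M)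
    (v : List (Bool × Cut) → M) (h₁ : ∀ c ∈ cutsOf t, ∀ cs, F ((true, c) :: cs) = u₁ c * v cs)
    (h₀ : ∀ c ∈ cutsOf t, ∀ cs, F ((false, c) :: cs) = u₀ c * v cs) :
    ((cutsOfList (t :: ts)).map F).sum =
      ((cutsOf t).map fun c => u₁ c + u₀ c).sum * ((cutsOfList ts).map v).sum := by
  simp only [cutsOfList, List.flatMap, List.map_flatten, List.sum_flatten, List.map_map]
  rw [← List.sum_map_mul_right]
  refine congrArg List.sum (List.map_congr_left fun c hc => ?_)
  simp [Function.comp_def, h₁ c hc, h₀ c hc, add_mul, List.sum_map_mul_left]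

mutual
theorem sum_cutsOf_boole_isEmpty {M : Type*} [NonAssocSemiring M] :
    ∀ t : PTree, ((cutsOf t).map fun c => if c.isEmpty then (1 : M) else 0).sum = 1
  | .node l => by
    rw [cutsOf, List.map_map]
    exact sum_cutsOfList_boole_isEmptyList l

theorem sum_cutsOfList_boole_isEmptyList {M : Type*} [NonAssocSemiring M] :
    ∀ l : List PTree,
      ((cutsOfList l).map fun cs => if Cut.isEmptyList cs then (1 : M) else 0).sum = 1
  | [] => by simp [cutsOfList, Cut.isEmptyList]
  | t :: ts => by
    rw [sum_map_cutsOfList_cons _ (fun _ => 0) (fun c => if c.isEmpty then 1 else 0)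
      (fun cs => if Cut.isEmptyList cs then 1 else 0)
      (fun _ _ _ => by simp [Cut.isEmptyList])
      (fun _ _ _ => by rw [boole_mul]; simp [Cut.isEmptyList, ite_and]),
      sum_cutsOfList_boole_isEmptyList ts]
    simpa using sum_cutsOf_boole_isEmpty t
end

end PTree

open AddMonoidAlgebra

section Coproduct

variable {k : Type*} [CommSemiring k]

theorem idTensorBplus_zero : idTensorBplus k 0 = 0 := mapDomain_zero _

theorem idTensorBplus_single (a b : Multiset RTree) (r : k) :
    idTensorBplus k (single (a, b) r) = single (a, {RTree.node b}) r :=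
  mapDomain_single

theorem idTensorBplus_list_sum (l : List (HK2 k)) :
    idTensorBplus k l.sum = (l.map (idTensorBplus k)).sum := by
  induction l with
  | nil => exact idTensorBplus_zero
  | cons f l ih => rw [List.sum_cons, List.map_cons, List.sum_cons, ← ih]; exact mapDomain_add ..

namespace PTree

variable (k)

noncomputable def cutWeight (t : PTree) (c : Cut) : HK2 k :=
  if c.admissible then single (toRForest (t.Pcut c), {toR (t.Rcut c)}) 1 else 0

noncomputable def decorationWeight (l : List PTree) (cs : List (Bool × Cut)) : HK2 k :=
  if Cut.admissibleList cs then
    single (toRForest (cutPiecesList l cs).2, toRForest (cutPiecesList l cs).1) 1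
  else 0

noncomputable def cutSum (t : PTree) : HK2 k := ((cutsOf t).map (cutWeight k t)).sum

noncomputable def cutSumList (l : List PTree) : HK2 k :=
  ((cutsOfList l).map (decorationWeight k l)).sum

noncomputable def comul (t : PTree) : HK2 k := single ({toR t}, 0) 1 + cutSum k t

variable {k}

theorem decorationWeight_cons_true {t : PTree} {c : Cut} (hc : c ∈ cutsOf t) (ts : List PTree)
    (cs : List (Bool × Cut)) :
    decorationWeight k (t :: ts) ((true, c) :: cs) =
      ((if c.isEmpty then 1 else 0) * single ({toR t}, 0) 1) * decorationWeight k ts cs := by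
  by_cases he : c.isEmpty
  · simp [decorationWeight, Cut.admissibleList, cutPiecesList, cutPieces_of_isEmpty hc he, he,
      single_mul_single, toRForest, Multiset.singleton_add]
  · simp [decorationWeight, Cut.admissibleList, he]

theorem decorationWeight_cons_false (t : PTree) (c : Cut) (ts : List PTree)
    (cs : List (Bool × Cut)) :
    decorationWeight k (t :: ts) ((false, c) :: cs) =
      cutWeight k t c * decorationWeight k ts cs := by
  by_cases ha : c.admissible <;> by_cases has : Cut.admissibleList cs <;>
    simp [decorationWeight, cutWeight, Cut.admissibleList, cutPiecesList, ha, has,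
      single_mul_single, toRForest, Rcut, Pcut, Multiset.singleton_add]

theorem cutSumList_cons (t : PTree) (ts : List PTree) :
    cutSumList k (t :: ts) = comul k t * cutSumList k ts := by
  rw [cutSumList, sum_map_cutsOfList_cons _ _ _ _ (fun c hc => decorationWeight_cons_true hc ts)
    (fun c _ => decorationWeight_cons_false t c ts), List.sum_map_add, List.sum_map_mul_right,
    sum_cutsOf_boole_isEmpty, one_mul, comul, cutSum, cutSumList]

theorem cutSumList_eq_prod (l : List PTree) : cutSumList k l = (l.map (comul k)).prod := by
  induction l with
  | nil => simp [cutSumList, cutsOfList, decorationWeight, Cut.admissibleList, cutPiecesList,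
      toRForest, one_def, Prod.mk_zero_zero]
  | cons t ts ih => rw [cutSumList_cons, ih, List.map_cons, List.prod_cons]

theorem cutWeight_node (l : List PTree) (cs : List (Bool × Cut)) :
    cutWeight k (.node l) (.node cs) = idTensorBplus k (decorationWeight k l cs) := by
  by_cases ha : Cut.admissibleList cs
  · simp [cutWeight, decorationWeight, Cut.admissible, ha, idTensorBplus_single, Pcut, Rcut,
      cutPieces, RTree.node_toRForest]
  · simp [cutWeight, decorationWeight, Cut.admissible, ha, idTensorBplus_zero]

theorem cutSum_node (l : List PTree) : cutSum k (.node l) = idTensorBplus k (cutSumList k l) := by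
  rw [cutSum, cutsOf, List.map_map, cutSumList, idTensorBplus_list_sum, List.map_map]
  exact congrArg List.sum (List.map_congr_left fun cs _ => cutWeight_node l cs)

theorem comul_node (l : List PTree) :
    comul k (.node l) =
      single ({toR (.node l)}, 0) 1 + idTensorBplus k (l.map (comul k)).prod := by
  rw [comul, cutSum_node, cutSumList_eq_prod]

mutual
theorem Equiv.comul_eq : ∀ {t u : PTree}, t.Equiv u → comul k t = comul k u
  | .node _, .node _, h@(.node hf hp) => by
    rw [comul_node, comul_node, toR_eq_toR_iff.mpr h, forall₂_equiv_map_comul hf,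
      (hp.map _).prod_eq]

theorem forall₂_equiv_map_comul : ∀ {l m : List PTree}, List.Forall₂ Equiv l m →
    l.map (comul k) = m.map (comul k)
  | [], [], .nil => rfl
  | _ :: _, _ :: _, .cons h hs => by
    rw [List.map_cons, List.map_cons, h.comul_eq, forall₂_equiv_map_comul hs]
end

end PTree

theorem ckComulTree_eq_comul_out (t : RTree) : ckComulTree k t = t.out.comul k := by
  rw [ckComulTree, PTree.comul, PTree.cutSum, List.sum_map_filter, RTree.toR_out]
  rfl

theorem ckComulTree_toR (t : PTree) : ckComulTree k (toR t) = t.comul k := by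
  rw [ckComulTree_eq_comul_out, (PTree.equiv_out_toR t).comul_eq]

theorem ckComulForest_toRForest (l : List PTree) :
    ckComulForest k (toRForest l) = (l.map (PTree.comul k)).prod := by
  simp [ckComulForest, toRForest, Function.comp_def, ckComulTree_toR]

end Coproduct

/-- The two descriptions of the Connes–Kreimer coproduct agree:
for every rooted tree `t`,
`Δ(t) = t ⊗ 1 + (id ⊗ B₊)(Δ(B₋(t)))`, where `Δ` is the admissible-cut
coproduct, extended multiplicatively to forests. -/
theorem ck_coproduct_recursion (k : Type*) [Field k] [CharZero k] (t : RTree) :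
    ckComulTree k t
      = AddMonoidAlgebra.single (({t} : Multiset RTree), (0 : Multiset RTree)) (1 : k)
        + idTensorBplus k (ckComulForest k (branches t)) := by
  rcases hl : t.out with ⟨l⟩
  have hb : branches t = toRForest l := by simp only [branches, hl]; rfl
  rw [ckComulTree_eq_comul_out, hl, PTree.comul_node, hb, ckComulForest_toRForest, ← hl,
    RTree.toR_out]
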